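/- arXiv:math/9808037 — 7 statements merged into one kernel-verified Lean document; each statement's English description precedes it below -/
import Mathlib

section
/- Let k be a field, H a Hopf algebra over k with comultiplication Δ and antipode S, and V₁, V₂ left H-modules with action homomorphisms ρ₁ : H → End_k(V₁), ρ₂ : H → End_k(V₂). Consider the subspace Hom_k(V₁,V₂)_f of finite-rank k-linear operators L : V₁ → V₂. Then: (a) for each a ∈ H with Δ(a) = Σ a₍₁₎ ⊗ a₍₂₎, the formula a·L = Σ ρ₂(a₍₁₎) ∘ L ∘ ρ₁(S(a₍₂₎)) maps Hom_k(V₁,V₂)_f to itself and defines an H-module structure on Hom_k(V₁,V₂)_f under which the evaluation map Hom_k(V₁,V₂)_f ⊗ V₁ → V₂, L ⊗ v ↦ Lv, is a morphism of H-modules; (b) this H-module structure is unique: any H-module structure on Hom_k(V₁,V₂)_f (extending the given k-vector space structure) for which the evaluation map is a morphism of H-modules is given by the above formula. -/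
/-!
The action is `Δ` followed by the bilinear map `b ⊗ c ↦ ρ₂(b) ∘ - ∘ ρ₁(S c)`, which is
multiplicative on `H ⊗ H` because `S` reverses products; hence an `H`-module structure, and
finite rank is kept since each summand composes `L` with operators on both sides.
Coassociativity and the antipode axioms give `∑ a₁ ⊗ S(a₂) a₃ = a ⊗ 1 = ∑ a₁ ⊗ a₂ S(a₃)`
in `H ⊗ H`. Evaluating the first at `x ⊗ y ↦ ρ₂(x) (L (ρ₁(y) v))` shows that evaluation is
`H`-linear; evaluating the second at `x ⊗ y ↦ (Φ(x) L) (ρ₁(y) v)` and applying the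
hypothesis on `Φ` to `a₁` turns `Φ(a) L` into `∑ ρ₂(a₁) ∘ L ∘ ρ₁(S a₂)`.
-/

open HopfAlgebra

variable {k H V₁ V₂ : Type*}

def finRankHom (k V₁ V₂ : Type*) [Field k] [AddCommGroup V₁] [Module k V₁]
    [AddCommGroup V₂] [Module k V₂] : Submodule k (V₁ →ₗ[k] V₂) where
  carrier := {L | FiniteDimensional k (LinearMap.range L)}
  zero_mem' := by
    show FiniteDimensional k (LinearMap.range (0 : V₁ →ₗ[k] V₂))
    rw [LinearMap.range_zero]
    infer_instance
  add_mem' := by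
    intro f g hf hg
    have : FiniteDimensional k (LinearMap.range f) := hf
    have : FiniteDimensional k (LinearMap.range g) := hg
    have hle : LinearMap.range (f + g) ≤ LinearMap.range f ⊔ LinearMap.range g := by
      rintro x ⟨v, rfl⟩
      exact Submodule.mem_sup.2 ⟨f v, ⟨v, rfl⟩, g v, ⟨v, rfl⟩, rfl⟩
    exact Submodule.finiteDimensional_of_le hle
  smul_mem' := by
    intro c f hf
    have : FiniteDimensional k (LinearMap.range f) := hf
    have hle : LinearMap.range (c • f) ≤ LinearMap.range f := by
      rintro x ⟨v, rfl⟩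
      exact ⟨c • v, by simp⟩
    exact Submodule.finiteDimensional_of_le hle

section

variable [Field k] [Ring H] [HopfAlgebra k H] [AddCommGroup V₁] [Module k V₁]
  [AddCommGroup V₂] [Module k V₂]

/-- The bilinear map `H → H → End (Hom(V₁,V₂))` sending `b ⊗ c` to
`L ↦ ρ₂(b) ∘ L ∘ ρ₁(S(c))`. -/
noncomputable def homActionAux (ρ₁ : H →ₐ[k] Module.End k V₁)
    (ρ₂ : H →ₐ[k] Module.End k V₂) :
    H →ₗ[k] H →ₗ[k] Module.End k (V₁ →ₗ[k] V₂) :=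
  ((LinearMap.mul k (Module.End k (V₁ →ₗ[k] V₂))) ∘ₗ
      ((LinearMap.llcomp k V₁ V₂ V₂) ∘ₗ ρ₂.toLinearMap)).compl₂
    ((LinearMap.llcomp k V₁ V₁ V₂).flip ∘ₗ (ρ₁.toLinearMap ∘ₗ antipode (R := k)))

/-- The action of `a : H` on `Hom_k(V₁,V₂)`:
`a·L = Σ ρ₂(a₍₁₎) ∘ L ∘ ρ₁(S(a₍₂₎))` where `Δ(a) = Σ a₍₁₎ ⊗ a₍₂₎`. -/
noncomputable def homAction (ρ₁ : H →ₐ[k] Module.End k V₁)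
    (ρ₂ : H →ₐ[k] Module.End k V₂) (a : H) : Module.End k (V₁ →ₗ[k] V₂) :=
  TensorProduct.lift (homActionAux ρ₁ ρ₂) (Coalgebra.comul a)

open Coalgebra TensorProduct

section Hopf

variable {R A : Type*} [CommSemiring R]

noncomputable def Coalgebra.Repr.uliftFin.{w} [AddCommMonoid A] [Module R A] [CoalgebraStruct R A]
    {a : A} {ι : Type*} (r : Repr R a ι) : Repr R a (ULift.{w} (Fin r.index.card)) where
  index := Finset.univ
  left i := r.left (r.index.equivFin.symm i.down)
  right i := r.right (r.index.equivFin.symm i.down)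
  eq := by
    rw [← r.eq, ← Finset.sum_coe_sort r.index]
    exact Fintype.sum_equiv (Equiv.ulift.trans r.index.equivFin.symm) _ _ fun _ => rfl

variable [Semiring A]

theorem Bialgebra.sum_tmul_apply_tmul_eq_tmul_one [Bialgebra R A] {g : A ⊗[R] A →ₗ[R] A}
    (hg : g ∘ₗ comul = Algebra.linearMap R A ∘ₗ counit) {a : A} {ι : Type*} {κ : ι → Type*}
    (repr : Repr R a ι) (r : (i : ι) → Repr R (repr.left i) (κ i)) :
    ∑ i ∈ repr.index, ∑ j ∈ (r i).index, (r i).left j ⊗ₜ[R] g ((r i).right j ⊗ₜ[R] repr.right i) =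
      a ⊗ₜ[R] 1 := by
  have h := congr(g.lTensor A $(sum_tmul_tmul_eq repr r fun i => ℛ R (repr.right i)))
  simp only [map_sum, LinearMap.lTensor_tmul] at h
  have hg' (x : A) : g (comul x) = algebraMap R A (counit x) := congr($hg x)
  have h1 := congr((Algebra.linearMap R A).lTensor A $(sum_tmul_counit_eq (R := R) repr))
  simp only [map_sum, LinearMap.lTensor_tmul, Algebra.linearMap_apply, map_one] at h1
  simp only [h, ← tmul_sum, ← map_sum, (ℛ R _).eq, hg', h1]

variable [HopfAlgebra R A] {a : A} {ι : Type*} {κ : ι → Type*}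

theorem HopfAlgebra.sum_tmul_antipode_mul_eq_tmul_one (repr : Repr R a ι)
    (r : (i : ι) → Repr R (repr.left i) (κ i)) :
    ∑ i ∈ repr.index, ∑ j ∈ (r i).index,
      (r i).left j ⊗ₜ[R] (antipode R ((r i).right j) * repr.right i) = a ⊗ₜ[R] 1 := by
  have hg : (LinearMap.mul' R A ∘ₗ (antipode R).rTensor A) ∘ₗ comul =
      Algebra.linearMap R A ∘ₗ counit := mul_antipode_rTensor_comul
  simpa using Bialgebra.sum_tmul_apply_tmul_eq_tmul_one hg repr r

theorem HopfAlgebra.sum_tmul_mul_antipode_eq_tmul_one (repr : Repr R a ι)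
    (r : (i : ι) → Repr R (repr.left i) (κ i)) :
    ∑ i ∈ repr.index, ∑ j ∈ (r i).index,
      (r i).left j ⊗ₜ[R] ((r i).right j * antipode R (repr.right i)) = a ⊗ₜ[R] 1 := by
  have hg : (LinearMap.mul' R A ∘ₗ (antipode R).lTensor A) ∘ₗ comul =
      Algebra.linearMap R A ∘ₗ counit := mul_antipode_lTensor_comul
  simpa using Bialgebra.sum_tmul_apply_tmul_eq_tmul_one hg repr r

end Hopf

theorem LinearMap.comp_comp_mem_finRankHom {k U W V₁ V₂ : Type*} [Field k] [AddCommGroup U]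
    [Module k U] [AddCommGroup W] [Module k W] [AddCommGroup V₁] [Module k V₁] [AddCommGroup V₂]
    [Module k V₂] (f : W →ₗ[k] V₂) (g : V₁ →ₗ[k] U) {L : U →ₗ[k] W}
    (hL : L ∈ finRankHom k U W) : f ∘ₗ L ∘ₗ g ∈ finRankHom k V₁ V₂ := by
  have : FiniteDimensional k (range L) := hL
  show FiniteDimensional k (range (f ∘ₗ L ∘ₗ g))
  rw [range_comp]
  exact Submodule.finiteDimensional_of_le (Submodule.map_mono (range_comp_le_range g L))

section Action

variable (ρ₁ : H →ₐ[k] Module.End k V₁) (ρ₂ : H →ₐ[k] Module.End k V₂)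

@[simp] theorem homActionAux_apply (b c : H) (L : V₁ →ₗ[k] V₂) :
    homActionAux ρ₁ ρ₂ b c L = ρ₂ b ∘ₗ L ∘ₗ ρ₁ (antipode k c) := rfl

theorem homAction_eq_sum {a : H} {ι : Type*} (r : Repr k a ι) :
    homAction ρ₁ ρ₂ a = ∑ i ∈ r.index, homActionAux ρ₁ ρ₂ (r.left i) (r.right i) := by
  simp [homAction, ← r.eq]

theorem homAction_mem_finRankHom (a : H) {L : V₁ →ₗ[k] V₂} (hL : L ∈ finRankHom k V₁ V₂) :
    homAction ρ₁ ρ₂ a L ∈ finRankHom k V₁ V₂ := by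
  rw [homAction_eq_sum ρ₁ ρ₂ (ℛ k a), LinearMap.sum_apply]
  exact Submodule.sum_mem _ fun i _ => LinearMap.comp_comp_mem_finRankHom _ _ hL

theorem homAction_one : homAction ρ₁ ρ₂ (1 : H) = 1 := by
  ext L v
  simp [homAction, Algebra.TensorProduct.one_def]

theorem homActionAux_mul_mul (b b' c c' : H) :
    homActionAux ρ₁ ρ₂ (b * b') (c * c') = homActionAux ρ₁ ρ₂ b c * homActionAux ρ₁ ρ₂ b' c' := by
  ext L v
  simp [antipode_mul_antidistrib]

theorem homAction_mul (a b : H) :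
    homAction ρ₁ ρ₂ (a * b) = homAction ρ₁ ρ₂ a * homAction ρ₁ ρ₂ b := by
  rw [homAction_eq_sum ρ₁ ρ₂ ((ℛ k a).mul (ℛ k b)), homAction_eq_sum ρ₁ ρ₂ (ℛ k a),
    homAction_eq_sum ρ₁ ρ₂ (ℛ k b), Finset.sum_mul_sum, Repr.mul_index, Finset.sum_product]
  simp only [Repr.mul_left, Repr.mul_right, homActionAux_mul_mul]

theorem sum_homAction_apply_apply {a : H} {ι : Type*} (repr : Repr k a ι) (L : V₁ →ₗ[k] V₂)
    (v : V₁) :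
    ∑ i ∈ repr.index, homAction ρ₁ ρ₂ (repr.left i) L (ρ₁ (repr.right i) v) = ρ₂ a (L v) := by
  have h := congr(TensorProduct.lift
    (((LinearMap.llcomp k V₁ V₂ V₂).flip L ∘ₗ ρ₂.toLinearMap).compl₂
      (LinearMap.applyₗ v ∘ₗ ρ₁.toLinearMap))
    $(sum_tmul_antipode_mul_eq_tmul_one repr fun i => ℛ k (repr.left i)))
  simpa [homAction_eq_sum ρ₁ ρ₂ (ℛ k _), map_sum] using h

universe w in
theorem homAction_unique (Φ : H →ₐ[k] Module.End k (finRankHom k V₁ V₂))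
    (hΦ : ∀ (a : H) {ι : Type w} (repr : Repr k a ι) (L : finRankHom k V₁ V₂) (v : V₁),
      ∑ i ∈ repr.index, (Φ (repr.left i) L : V₁ →ₗ[k] V₂) (ρ₁ (repr.right i) v) =
        ρ₂ a ((L : V₁ →ₗ[k] V₂) v))
    (a : H) (L : finRankHom k V₁ V₂) :
    (Φ a L : V₁ →ₗ[k] V₂) = homAction ρ₁ ρ₂ a (L : V₁ →ₗ[k] V₂) := by
  ext v
  -- `hΦ` only speaks about representations indexed in the universe `w`
  have h := congr(TensorProduct.lift (((finRankHom k V₁ V₂).subtype ∘ₗ LinearMap.applyₗ L ∘ₗ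
      Φ.toLinearMap).compl₂ (LinearMap.applyₗ v ∘ₗ ρ₁.toLinearMap))
    $(sum_tmul_mul_antipode_eq_tmul_one (ℛ k a)
      (κ := fun i => ULift.{w} (Fin (ℛ k ((ℛ k a).left i)).index.card)) fun i => (ℛ k _).uliftFin))
  simp only [map_sum, lift.tmul, LinearMap.compl₂_apply, LinearMap.coe_comp, Submodule.coe_subtype,
    AlgHom.coe_toLinearMap, Function.comp_apply, LinearMap.applyₗ_apply_apply, map_mul,
    Module.End.mul_apply, map_one, Module.End.one_apply] at h
  rw [← h, homAction_eq_sum ρ₁ ρ₂ (ℛ k a), LinearMap.sum_apply, LinearMap.sum_apply]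
  exact Finset.sum_congr rfl fun i _ => hΦ _ _ L _

end Action

/-- (a) The formula `a·L = Σ ρ₂(a₍₁₎) ∘ L ∘ ρ₁(S(a₍₂₎))` preserves the subspace of
finite-rank operators and defines an `H`-module structure on it under which the
evaluation map `L ⊗ v ↦ L v` is a morphism of `H`-modules; (b) it is the unique
such `H`-module structure. -/
theorem homAction_finiteRank_spec (ρ₁ : H →ₐ[k] Module.End k V₁)
    (ρ₂ : H →ₐ[k] Module.End k V₂) :
    -- (a) the formula preserves finite-rank operators …
    (∀ (a : H) (L : V₁ →ₗ[k] V₂), L ∈ finRankHom k V₁ V₂ →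
      homAction ρ₁ ρ₂ a L ∈ finRankHom k V₁ V₂) ∧
    -- … and defines an `H`-module structure (a unital multiplicative action) …
    homAction ρ₁ ρ₂ (1 : H) = 1 ∧
    (∀ a b : H, homAction ρ₁ ρ₂ (a * b) = homAction ρ₁ ρ₂ a * homAction ρ₁ ρ₂ b) ∧
    -- … under which the evaluation map `Hom_f ⊗ V₁ → V₂` is a morphism of `H`-modules:
    (∀ (a : H) {ι : Type*} (repr : Coalgebra.Repr k a ι) (L : V₁ →ₗ[k] V₂), L ∈ finRankHom k V₁ V₂ →
      ∀ v : V₁,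
        ∑ i ∈ repr.index, homAction ρ₁ ρ₂ (repr.left i) L (ρ₁ (repr.right i) v) =
          ρ₂ a (L v)) ∧
    -- (b) uniqueness: any `H`-module structure on the finite-rank operators making
    -- evaluation a morphism of `H`-modules is given by the same formula.
    (∀ Φ : H →ₐ[k] Module.End k (finRankHom k V₁ V₂),
      (∀ (a : H) {ι : Type*} (repr : Coalgebra.Repr k a ι) (L : finRankHom k V₁ V₂) (v : V₁),
        ∑ i ∈ repr.index, (Φ (repr.left i) L : V₁ →ₗ[k] V₂) (ρ₁ (repr.right i) v) =
          ρ₂ a ((L : V₁ →ₗ[k] V₂) v)) →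
      ∀ (a : H) (L : finRankHom k V₁ V₂),
        (Φ a L : V₁ →ₗ[k] V₂) = homAction ρ₁ ρ₂ a (L : V₁ →ₗ[k] V₂)) :=
  ⟨fun a _ hL => homAction_mem_finRankHom ρ₁ ρ₂ a hL, homAction_one ρ₁ ρ₂, homAction_mul ρ₁ ρ₂,
    fun _ _ repr L _ v => sum_homAction_apply_apply ρ₁ ρ₂ repr L v,
    fun Φ hΦ => homAction_unique ρ₁ ρ₂ Φ hΦ⟩

end
end

section
/- Let k be a field, H a Hopf algebra over k with comultiplication Δ, counit ε and antipode S. Let V be a finite-dimensional k-vector space, ρ : H → End_k(V) a k-algebra homomorphism making V an H-module, and let g ∈ End_k(V) be invertible with ρ(S(S(a))) = g ∘ ρ(a) ∘ g⁻¹ for all a ∈ H. Then the linear functional End_k(V) → k, L ↦ tr(L ∘ g), is an invariant integral for the canonical H-action on End_k(V): for every a ∈ H with Δ(a) = Σ a₍₁₎ ⊗ a₍₂₎ and every L ∈ End_k(V), Σ tr(ρ(a₍₁₎) ∘ L ∘ ρ(S(a₍₂₎)) ∘ g) = ε(a)·tr(L ∘ g). -/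
/-!
Cyclicity of the trace carries `ρ(a₁)` around to the right of `g`, and `g ρ(b) = ρ(S² b) g`
brings it back to the left of `g` as `ρ(S² a₁)`. What remains is `Σ S(a₂) S²(a₁) = S(Σ S(a₁) a₂)`,
which is `ε(a)` by the antipode axiom, since `S` is an antihomomorphism with `S 1 = 1`.
-/

open HopfAlgebra

namespace HopfAlgebra

open Coalgebra

variable {R A ι : Type*} [CommSemiring R] [Semiring A] [HopfAlgebra R A] {a : A}

lemma sum_antipode_mul_antipode_antipode_eq_algebraMap_counit (repr : Repr R a ι) :
    ∑ i ∈ repr.index, antipode R (repr.right i) * antipode R (antipode R (repr.left i)) =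
      algebraMap R A (counit a) := by
  simp_rw [← antipode_mul_antidistrib, ← map_sum, sum_antipode_mul_eq_algebraMap_counit,
    Algebra.algebraMap_eq_smul_one, map_smul, antipode_one]

end HopfAlgebra

namespace LinearMap

variable {R M : Type*} [CommSemiring R] [AddCommMonoid M] [Module R M]

lemma trace_mul_mul_eq_of_mul_eq {x x' g : Module.End R M} (h : g * x = x' * g)
    (N : Module.End R M) : trace R M (x * N * g) = trace R M (N * x' * g) := by
  rw [mul_assoc, trace_mul_comm, mul_assoc, h, mul_assoc]

end LinearMap

theorem trace_invariant_integral_general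
    {k H V : Type*} [Field k] [Ring H] [HopfAlgebra k H]
    [AddCommGroup V] [Module k V]
    (ρ : H →ₐ[k] Module.End k V) (g : (Module.End k V)ˣ)
    (hg : ∀ a : H, ρ (antipode (R := k) (antipode (R := k) a)) = ↑g * ρ a * ↑g⁻¹) :
    ∀ (a : H) (ι : Type _) (repr : Coalgebra.Repr k a ι) (L : Module.End k V),
      ∑ i ∈ repr.index,
          LinearMap.trace k V (ρ (repr.left i) * L * ρ (antipode (R := k) (repr.right i)) * ↑g) =
        Coalgebra.counit (R := k) a * LinearMap.trace k V (L * ↑g) := by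
  intro a ι repr L
  have hg_mul (b : H) : ↑g * ρ b = ρ (antipode k (antipode k b)) * ↑g :=
    (g.eq_mul_inv_iff_mul_eq.1 (hg b)).symm
  calc ∑ i ∈ repr.index,
        LinearMap.trace k V (ρ (repr.left i) * L * ρ (antipode k (repr.right i)) * ↑g)
      = ∑ i ∈ repr.index, LinearMap.trace k V
          (L * ρ (antipode k (repr.right i) * antipode k (antipode k (repr.left i))) * ↑g) := by
        refine Finset.sum_congr rfl fun i _ => ?_
        rw [mul_assoc (ρ _) L, LinearMap.trace_mul_mul_eq_of_mul_eq (hg_mul _), map_mul ρ,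
          mul_assoc L]
    _ = LinearMap.trace k V (L * ρ (∑ i ∈ repr.index,
          antipode k (repr.right i) * antipode k (antipode k (repr.left i))) * ↑g) := by
        simp only [map_sum, Finset.mul_sum, Finset.sum_mul]
    _ = Coalgebra.counit (R := k) a * LinearMap.trace k V (L * ↑g) := by
        rw [sum_antipode_mul_antipode_antipode_eq_algebraMap_counit, AlgHom.commutes,
          Algebra.algebraMap_eq_smul_one, mul_smul_one, smul_mul_assoc, map_smul, smul_eq_mul]

/-- For an `H`-module `V` (action `ρ`) and an invertible `g` intertwining `S²` with
conjugation by `g`, the functional `L ↦ tr (L ∘ g)` is an invariant integral on `End V`: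
`Σ tr (ρ(a₍₁₎) ∘ L ∘ ρ(S a₍₂₎) ∘ g) = ε(a) · tr (L ∘ g)`. -/
theorem trace_invariant_integral
    {k H V : Type*} [Field k] [Ring H] [HopfAlgebra k H]
    [AddCommGroup V] [Module k V] [FiniteDimensional k V]
    (ρ : H →ₐ[k] Module.End k V) (g : (Module.End k V)ˣ)
    (hg : ∀ a : H, ρ (antipode (R := k) (antipode (R := k) a)) = ↑g * ρ a * ↑g⁻¹) :
    ∀ (a : H) (ι : Type _) (repr : Coalgebra.Repr k a ι) (L : Module.End k V),
      ∑ i ∈ repr.index,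
          LinearMap.trace k V (ρ (repr.left i) * L * ρ (antipode (R := k) (repr.right i)) * ↑g) =
        Coalgebra.counit (R := k) a * LinearMap.trace k V (L * ↑g) :=
  trace_invariant_integral_general ρ g hg
end

section
/- Let k be a field and H a Hopf algebra over k with comultiplication Δ, counit ε and antipode S. Let F be a k-algebra that is also an H-module such that multiplication is H-equivariant, i.e. a·(fg) = Σ (a₍₁₎·f)(a₍₂₎·g) for all a ∈ H, f,g ∈ F (where Δ(a) = Σ a₍₁₎ ⊗ a₍₂₎), and a·1_F = ε(a)1_F. Let M be an F-bimodule that is also an H-module with a·(f m) = Σ (a₍₁₎·f)(a₍₂₎·m) and a·(m f) = Σ (a₍₁₎·m)(a₍₂₎·f) for all a ∈ H, f ∈ F, m in M. Let η : M → k be a k-linear invariant integral, i.e. η(a·m) = ε(a)η(m) for all a ∈ H, m ∈ M. Then for all a ∈ H, f ∈ F, ψ ∈ M: η((a·f)ψ) = η(f(S(a)·ψ)) and η((a·ψ)f) = η(ψ(S(a)·f)) (the formula of integration by parts). -/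
/-!
Both formulas are instances of one identity for a bilinear form `B` on `H` satisfying
`Σ B(b₁, b₂ c) = ε(b) B(1, c)`, namely `B(1, S a) = B(a, 1)`: expanding `S a` by counitality
and applying the invariance to the first Sweedler factor gives `Σ B(a₁₁, a₁₂ S(a₂))`, which by
coassociativity and `Σ a₁ S(a₂) = ε(a)` is `B(a, 1)`. For `η((a·f)ψ)` take
`B(x, y) = η((x·f)(y·ψ))`, for `η((a·ψ)f)` take `B(x, y) = η((x·ψ)(y·f))`; invariance of `B` is
invariance of `η` combined with covariance of the corresponding action.
-/

open HopfAlgebra TensorProduct Coalgebra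

universe w

namespace Coalgebra.Repr

variable {k A ι : Type*} [CommSemiring k] [AddCommMonoid A] [Module k A] [CoalgebraStruct k A]
  {a : A}

/-- Covariance hypotheses quantify over index types in one fixed universe; reindexing along
`Fin` makes them applicable to any representation. -/
noncomputable def reindexFin (R : Repr k a ι) : Repr k a (ULift.{w} (Fin R.index.card)) where
  index := Finset.univ
  left i := R.left (R.index.equivFin.symm i.down)
  right i := R.right (R.index.equivFin.symm i.down)
  eq := by
    rw [← R.eq, ← Finset.sum_coe_sort R.index]
    exact Fintype.sum_equiv (Equiv.ulift.trans R.index.equivFin.symm) _ _ fun _ => rfl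

end Coalgebra.Repr

namespace HopfAlgebra

variable {k H : Type*} [Field k] [Ring H] [HopfAlgebra k H]

theorem sum_sum_tmul_mul_antipode_eq {a : H} {ι : Type*} {κ : ι → Type*} (R : Repr k a ι)
    (R₁ : ∀ i, Repr k (R.left i) (κ i)) :
    ∑ i ∈ R.index, ∑ j ∈ (R₁ i).index,
      (R₁ i).left j ⊗ₜ[k] ((R₁ i).right j * antipode k (R.right i)) = a ⊗ₜ[k] (1 : H) := by
  let R₂ i := Repr.arbitrary k (R.right i)
  have h := congr(LinearMap.lTensor H (LinearMap.mul' k H ∘ₗ LinearMap.lTensor H (antipode k))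
    $(sum_tmul_tmul_eq R R₁ R₂))
  simp only [map_sum, LinearMap.lTensor_tmul, LinearMap.comp_apply, LinearMap.mul'_apply,
    ← tmul_sum, sum_mul_antipode_eq_algebraMap_counit] at h
  rw [h]
  have := congr(LinearMap.lTensor H (Algebra.linearMap k H) $(sum_tmul_counit_eq R))
  simpa only [map_sum, LinearMap.lTensor_tmul, Algebra.linearMap_apply, map_one] using this

theorem apply_one_antipode_eq {V : Type*} [AddCommMonoid V] [Module k V] (B : H →ₗ[k] H →ₗ[k] V)
    (hB : ∀ (b c : H) {ι : Type w} (R : Repr k b ι),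
      counit (R := k) b • B 1 c = ∑ i ∈ R.index, B (R.left i) (R.right i * c))
    (a : H) : B 1 (antipode k a) = B a 1 := by
  let R := Repr.arbitrary k a
  let R₁ i := (Repr.arbitrary k (R.left i)).reindexFin.{w}
  calc B 1 (antipode k a)
      = ∑ i ∈ R.index, counit (R := k) (R.left i) • B 1 (antipode k (R.right i)) := by
        conv_lhs => rw [← sum_counit_smul R]
        simp only [map_sum, map_smul]
    _ = ∑ i ∈ R.index, ∑ j ∈ (R₁ i).index,
          B ((R₁ i).left j) ((R₁ i).right j * antipode k (R.right i)) :=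
        Finset.sum_congr rfl fun i _ => hB _ _ (R₁ i)
    _ = lift B (a ⊗ₜ[k] 1) := by
        simp only [← sum_sum_tmul_mul_antipode_eq R R₁, map_sum, lift.tmul]
    _ = B a 1 := lift.tmul _ _

end HopfAlgebra

theorem integration_by_parts_general
    {k H F M : Type*} [Field k] [Ring H] [HopfAlgebra k H]
    [Ring F] [Algebra k F] [AddCommGroup M] [Module k M]
    -- the H-module structure on F
    (α : H →ₐ[k] Module.End k F)
    -- the left and right F-module structures on M, making it an F-bimodule
    (l : F →ₐ[k] Module.End k M) (r : F →ₗ[k] Module.End k M)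
    -- the H-module structure on M
    (β : H →ₐ[k] Module.End k M)
    -- covariance of the left action F ⊗ M → M
    (hl_equiv : ∀ (a : H) {ι : Type*} (repr : Coalgebra.Repr k a ι) (f : F) (m : M),
      β a (l f m) = ∑ i ∈ repr.index, l (α (repr.left i) f) (β (repr.right i) m))
    -- covariance of the right action M ⊗ F → M
    (hr_equiv : ∀ (a : H) {ι : Type*} (repr : Coalgebra.Repr k a ι) (f : F) (m : M),
      β a (r f m) = ∑ i ∈ repr.index, r (α (repr.right i) f) (β (repr.left i) m))
    -- an invariant integral on M
    (η : M →ₗ[k] k)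
    (hη : ∀ (a : H) (m : M), η (β a m) = Coalgebra.counit (R := k) a * η m) :
    ∀ (a : H) (f : F) (ψ : M),
      η (l (α a f) ψ) = η (l f (β (antipode (R := k) a) ψ)) ∧
      η (r f (β a ψ)) = η (r (α (antipode (R := k) a) f) ψ) := by
  intro a f ψ
  constructor
  · let B : H →ₗ[k] H →ₗ[k] k := LinearMap.mk₂ k (fun x y => η (l (α x f) (β y ψ)))
      (by simp) (by simp) (by simp) (by simp)
    have hB := apply_one_antipode_eq B (fun b c ι R => by
      simp only [B, LinearMap.mk₂_apply, map_one, Module.End.one_apply, smul_eq_mul]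
      rw [← hη, hl_equiv b R, map_sum]
      simp only [map_mul, Module.End.mul_apply]) a
    simpa only [B, LinearMap.mk₂_apply, map_one, Module.End.one_apply] using hB.symm
  · let B : H →ₗ[k] H →ₗ[k] k := LinearMap.mk₂ k (fun x y => η (r (α y f) (β x ψ)))
      (by simp) (by simp) (by simp) (by simp)
    have hB := apply_one_antipode_eq B (fun b c ι R => by
      simp only [B, LinearMap.mk₂_apply, map_one, Module.End.one_apply, smul_eq_mul]
      rw [← hη, hr_equiv b R, map_sum]
      simp only [map_mul, Module.End.mul_apply]) a
    simpa only [B, LinearMap.mk₂_apply, map_one, Module.End.one_apply] using hB.symm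

/-- Integration by parts for an invariant integral on a covariant bimodule `M` over a
covariant algebra `F`: `η((a·f)ψ) = η(f(S(a)·ψ))` and `η((a·ψ)f) = η(ψ(S(a)·f))`. -/
theorem integration_by_parts
    {k H F M : Type*} [Field k] [Ring H] [HopfAlgebra k H]
    [Ring F] [Algebra k F] [AddCommGroup M] [Module k M]
    -- the H-module structure on F
    (α : H →ₐ[k] Module.End k F)
    -- covariance of the multiplication of F
    (hmul : ∀ (a : H) {ι : Type*} (repr : Coalgebra.Repr k a ι) (f g : F),
      α a (f * g) = ∑ i ∈ repr.index, α (repr.left i) f * α (repr.right i) g)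
    -- the unit of F is invariant
    (hone : ∀ a : H, α a (1 : F) = Coalgebra.counit (R := k) a • (1 : F))
    -- the left and right F-module structures on M, making it an F-bimodule
    (l : F →ₐ[k] Module.End k M) (r : F →ₗ[k] Module.End k M)
    (hr_mul : ∀ f g : F, r (f * g) = r g * r f) (hr_one : r 1 = 1)
    (hcomm : ∀ f g : F, l f * r g = r g * l f)
    -- the H-module structure on M
    (β : H →ₐ[k] Module.End k M)
    -- covariance of the left action F ⊗ M → M
    (hl_equiv : ∀ (a : H) {ι : Type*} (repr : Coalgebra.Repr k a ι) (f : F) (m : M),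
      β a (l f m) = ∑ i ∈ repr.index, l (α (repr.left i) f) (β (repr.right i) m))
    -- covariance of the right action M ⊗ F → M
    (hr_equiv : ∀ (a : H) {ι : Type*} (repr : Coalgebra.Repr k a ι) (f : F) (m : M),
      β a (r f m) = ∑ i ∈ repr.index, r (α (repr.right i) f) (β (repr.left i) m))
    -- an invariant integral on M
    (η : M →ₗ[k] k)
    (hη : ∀ (a : H) (m : M), η (β a m) = Coalgebra.counit (R := k) a * η m) :
    ∀ (a : H) (f : F) (ψ : M),
      η (l (α a f) ψ) = η (l f (β (antipode (R := k) a) ψ)) ∧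
      η (r f (β a ψ)) = η (r (α (antipode (R := k) a) f) ψ) :=
  integration_by_parts_general α l r β hl_equiv hr_equiv η hη
end

section
/- Let 0 < q < 1. For a finitely supported function ψ : ℕ → ℂ (ψ_m representing the value at the grid point x = q^{−2m}, so that x = (1−zz*)⁻¹ ranges over q^{−2ℤ₊}), define the radial Laplace–Beltrami operator □⁽⁰⁾ψ = −D x(1−q⁻¹x) D ψ, explicitly (□⁽⁰⁾ψ)_m = [(1−q^{−2m−2})(ψ_m − ψ_{m+1}) + (1−q^{−2m})(ψ_m − ψ_{m−1})] / (q^{−2m}(q⁻¹−q)²), where the second term is interpreted as 0 when m = 0 (its coefficient 1−q⁰ vanishes). Then the quadratic form identity Σ_{m=0}^∞ (□⁽⁰⁾ψ)_m · conj(ψ_m) · q^{−2m} = −q^{−2}(q⁻¹−q)^{−2} Σ_{m=0}^∞ q^{−2m}(1−q^{2m+2}) |ψ_m − ψ_{m+1}|² holds; in particular the quadratic form of □⁽⁰⁾ is real and non-positive. -/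
/-!
The numerator of `□⁽⁰⁾ψ` at `m` is the difference `F (m + 1) − F m` of the flux
`F m = (1 − q^{−2m}) (ψ_{m−1} − ψ_m)`, the discrete counterpart of `x(1 − q⁻¹x) Dψ`, and
`F 0 = 0`. Summation by parts against `conj ψ` therefore turns `⟨□⁽⁰⁾ψ, ψ⟩` into
`−∑ F (m + 1) conj (ψ_{m+1} − ψ_m)`, a weighted sum of `|ψ_m − ψ_{m+1}|²`, with weights
`q^{−2m−2} − 1 = q^{−2} q^{−2m} (1 − q^{2m+2})`, which are positive for `0 < q < 1`.
-/

/-- The radial part `□⁽⁰⁾ψ = −D x(1−q⁻¹x) D ψ` of the Laplace–Beltrami operator on the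
quantum disc, acting on functions on the grid `q^{−2ℤ₊}` (encoded as `ψ : ℕ → ℂ`,
`ψ m` being the value at `x = q^{−2m}`).  The `ψ (m−1)` term at `m = 0` is harmless
since its coefficient `1 − q⁰ = 0` vanishes. -/
noncomputable def radialBox (q : ℝ) (ψ : ℕ → ℂ) (m : ℕ) : ℂ :=
  ((1 - ((q : ℂ) ^ (2 * m + 2))⁻¹) * (ψ m - ψ (m + 1)) +
      (1 - ((q : ℂ) ^ (2 * m))⁻¹) * (ψ m - ψ (m - 1))) /
    (((q : ℂ) ^ (2 * m))⁻¹ * ((q : ℂ)⁻¹ - (q : ℂ)) ^ 2)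

open Finset

theorem Finset.sum_range_sub_mul {R : Type*} [CommRing R] (F g : ℕ → R) (n : ℕ) :
    ∑ m ∈ range n, (F (m + 1) - F m) * g m =
      F n * g n - F 0 * g 0 - ∑ m ∈ range n, F (m + 1) * (g (m + 1) - g m) := by
  rw [eq_sub_iff_add_eq, ← sum_add_distrib, ← sum_range_sub fun m => F m * g m]
  exact sum_congr rfl fun m _ => by ring

theorem finsum_eq_sum_range_of_forall_ge {M : Type*} [AddCommMonoid M] {f : ℕ → M} {N : ℕ}
    (hf : ∀ m ≥ N, f m = 0) : ∑ᶠ m, f m = ∑ m ∈ range N, f m :=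
  finsum_eq_sum_of_support_subset f fun m hm => by
    simpa using not_le.mp (mt (hf m) hm)

theorem Set.Finite.exists_forall_ge_eq_zero {M : Type*} [Zero M] {f : ℕ → M}
    (hf : (Function.support f).Finite) : ∃ N, ∀ m ≥ N, f m = 0 := by
  simpa [Nat.cofinite_eq_atTop] using hf.eventually_cofinite_notMem

theorem inv_pow_add_two_sub_one {K : Type*} [Field K] {q : K} (hq : q ≠ 0) (m : ℕ) :
    (q ^ (2 * m + 2))⁻¹ - 1 = (q ^ 2)⁻¹ * ((q ^ (2 * m))⁻¹ * (1 - q ^ (2 * m + 2))) := by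
  field_simp
  ring

section

variable (q : ℝ) (ψ : ℕ → ℂ)

noncomputable def radialFlux (m : ℕ) : ℂ :=
  (1 - ((q : ℂ) ^ (2 * m))⁻¹) * (ψ (m - 1) - ψ m)

@[simp]
theorem radialFlux_zero : radialFlux q ψ 0 = 0 := by
  simp [radialFlux]

variable {q}

theorem radialBox_mul_inv_pow (hq : q ≠ 0) (m : ℕ) :
    radialBox q ψ m * ((q : ℂ) ^ (2 * m))⁻¹ =
      (radialFlux q ψ (m + 1) - radialFlux q ψ m) / ((q : ℂ)⁻¹ - q) ^ 2 := by
  have hp : (q : ℂ) ^ (2 * m) ≠ 0 := pow_ne_zero _ (Complex.ofReal_ne_zero.mpr hq)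
  rw [radialBox, radialFlux, radialFlux, Nat.add_sub_cancel, div_mul_eq_mul_div,
    mul_comm _ (_ ^ 2), mul_div_mul_right _ _ (inv_ne_zero hp)]
  ring_nf

theorem radialFlux_succ_mul_conj (m : ℕ) :
    radialFlux q ψ (m + 1) * (starRingEnd ℂ) (ψ (m + 1) - ψ m) =
      (((q ^ (2 * m + 2))⁻¹ - 1) * ‖ψ m - ψ (m + 1)‖ ^ 2 : ℝ) := by
  rw [radialFlux, Nat.add_sub_cancel, ← neg_sub (ψ m), map_neg, mul_neg, mul_assoc,
    Complex.mul_conj, Complex.normSq_eq_norm_sq]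
  push_cast
  ring_nf

theorem sum_range_radialBox_mul_conj (hq : q ≠ 0) {N : ℕ} (hN : ψ N = 0) :
    ∑ m ∈ range N, radialBox q ψ m * (starRingEnd ℂ) (ψ m) * ((q : ℂ) ^ (2 * m))⁻¹ =
      ↑(-(q ^ 2)⁻¹ * ((q⁻¹ - q) ^ 2)⁻¹ *
        ∑ m ∈ range N, (q ^ (2 * m))⁻¹ * (1 - q ^ (2 * m + 2)) * ‖ψ m - ψ (m + 1)‖ ^ 2) := by
  calc _ = (∑ m ∈ range N,
          (radialFlux q ψ (m + 1) - radialFlux q ψ m) * (starRingEnd ℂ) (ψ m)) /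
        ((q : ℂ)⁻¹ - q) ^ 2 := by
        rw [sum_div]
        exact sum_congr rfl fun m _ => by
          rw [mul_right_comm, radialBox_mul_inv_pow ψ hq, div_mul_eq_mul_div]
    _ = -(∑ m ∈ range N, radialFlux q ψ (m + 1) * (starRingEnd ℂ) (ψ (m + 1) - ψ m)) /
        ((q : ℂ)⁻¹ - q) ^ 2 := by
        simp [sum_range_sub_mul, hN]
    _ = _ := by
        simp only [radialFlux_succ_mul_conj, inv_pow_add_two_sub_one hq]
        push_cast
        rw [mul_sum, ← sum_neg_distrib, sum_div]
        exact sum_congr rfl fun m _ => by ring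

end

/-- The quadratic form identity `⟨□⁽⁰⁾ψ, ψ⟩ = −q⁻²(q⁻¹−q)⁻² Σ q^{−2m}(1−q^{2m+2})
|ψ_m − ψ_{m+1}|²`; in particular the quadratic form of `□⁽⁰⁾` is real and non-positive. -/
theorem radialBox_quadratic_form (q : ℝ) (hq0 : 0 < q) (hq1 : q < 1)
    (ψ : ℕ → ℂ) (hψ : (Function.support ψ).Finite) :
    (∑ᶠ m : ℕ, radialBox q ψ m * (starRingEnd ℂ) (ψ m) * ((q : ℂ) ^ (2 * m))⁻¹ =
      ↑(-(q ^ 2)⁻¹ * ((q⁻¹ - q) ^ 2)⁻¹ *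
        ∑ᶠ m : ℕ, (q ^ (2 * m))⁻¹ * (1 - q ^ (2 * m + 2)) *
          ‖ψ m - ψ (m + 1)‖ ^ 2)) ∧
    (∑ᶠ m : ℕ, radialBox q ψ m * (starRingEnd ℂ) (ψ m) * ((q : ℂ) ^ (2 * m))⁻¹).im = 0 ∧
    (∑ᶠ m : ℕ, radialBox q ψ m * (starRingEnd ℂ) (ψ m) * ((q : ℂ) ^ (2 * m))⁻¹).re ≤ 0 := by
  obtain ⟨N, hN⟩ := hψ.exists_forall_ge_eq_zero
  have identity : ∑ᶠ m : ℕ, radialBox q ψ m * (starRingEnd ℂ) (ψ m) * ((q : ℂ) ^ (2 * m))⁻¹ =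
      ↑(-(q ^ 2)⁻¹ * ((q⁻¹ - q) ^ 2)⁻¹ *
        ∑ᶠ m : ℕ, (q ^ (2 * m))⁻¹ * (1 - q ^ (2 * m + 2)) * ‖ψ m - ψ (m + 1)‖ ^ 2) := by
    rw [finsum_eq_sum_range_of_forall_ge (N := N) fun m hm => by simp [hN m hm],
      finsum_eq_sum_range_of_forall_ge (N := N) fun m hm => by
        simp [hN m hm, hN (m + 1) (by omega)]]
    exact sum_range_radialBox_mul_conj ψ hq0.ne' (hN N le_rfl)
  refine ⟨identity, by rw [identity, Complex.ofReal_im], ?_⟩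
  rw [identity, Complex.ofReal_re]
  refine mul_nonpos_of_nonpos_of_nonneg (by simp only [neg_mul, Left.neg_nonpos_iff]; positivity)
    (finsum_nonneg fun m => mul_nonneg (mul_nonneg (by positivity) ?_) (by positivity))
  exact sub_nonneg.mpr (pow_le_one₀ hq0.le hq1.le)
end

section
/- Let h > 0 be real and l ∈ ℂ such that l ∉ ℤ + (2πi/h)ℤ, i.e. l ≠ n + (2πi/h)m for all integers n, m (equivalently, sinh((k∓l)h/2) ≠ 0 for every k ∈ ℤ). Let V^{(l)} be the space of finitely supported functions ℤ → ℂ with basis (e_k), equipped with the operators X⁺ e_k = (sinh((k−l)h/2)/sinh(h/2)) e_{k+1}, X⁻ e_k = −(sinh((k+l)h/2)/sinh(h/2)) e_{k−1}, H e_k = 2k e_k. Then V^{(l)} is a simple module: every ℂ-linear subspace W ⊆ V^{(l)} that is invariant under X⁺, X⁻ and H is either {0} or all of V^{(l)}. -/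
/-- The operator `X⁺ e_k = (sinh((k−l)h/2)/sinh(h/2)) e_{k+1}` on `V^{(l)} = ℤ →₀ ℂ`. -/
noncomputable def Xplus (h : ℝ) (l : ℂ) : (ℤ →₀ ℂ) →ₗ[ℂ] (ℤ →₀ ℂ) :=
  Finsupp.lsum ℂ fun k =>
    (Complex.sinh (((k : ℂ) - l) * h / 2) / Complex.sinh (h / 2)) • Finsupp.lsingle (k + 1)

/-- The operator `X⁻ e_k = −(sinh((k+l)h/2)/sinh(h/2)) e_{k−1}` on `V^{(l)} = ℤ →₀ ℂ`. -/
noncomputable def Xminus (h : ℝ) (l : ℂ) : (ℤ →₀ ℂ) →ₗ[ℂ] (ℤ →₀ ℂ) :=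
  Finsupp.lsum ℂ fun k =>
    (-(Complex.sinh (((k : ℂ) + l) * h / 2) / Complex.sinh (h / 2))) • Finsupp.lsingle (k - 1)

/-- The operator `H e_k = 2k e_k` on `V^{(l)} = ℤ →₀ ℂ`. -/
noncomputable def Hop : (ℤ →₀ ℂ) →ₗ[ℂ] (ℤ →₀ ℂ) :=
  Finsupp.lsum ℂ fun k => ((2 * k : ℤ) : ℂ) • Finsupp.lsingle k

/-! The weight vectors `e_k` are the eigenvectors of `H` for the pairwise distinct eigenvalues
`2k`, so an `H`-invariant subspace contains each component of each of its vectors; a nonzero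
invariant subspace therefore contains some `e_{k₀}`. The hypothesis on `l` makes every
coefficient `sinh((k ∓ l)h/2)` nonzero, so `X⁺` and `X⁻` move `e_k` to nonzero multiples of
`e_{k±1}`, and from `e_{k₀}` one reaches every basis vector. -/

open Finsupp Complex

section DiagonalInvariant

variable {α K : Type*} [Field K] {W : Submodule K (α →₀ K)}

theorem Submodule.mem_of_forall_single_apply_mem {v : α →₀ K}
    (hv : ∀ a ∈ v.support, single a (v a) ∈ W) : v ∈ W := by
  rw [← v.sum_single]
  exact Submodule.finsuppSum_mem _ _ _ _ fun a ha => hv a (mem_support_iff.mpr ha)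

theorem Submodule.single_mem_of_single_mem {a : α} {c : K} (hc : c ≠ 0)
    (h : single a c ∈ W) (d : K) : single a d ∈ W := by
  simpa [smul_single, div_mul_cancel₀ _ hc] using W.smul_mem (d / c) h

theorem Submodule.single_apply_mem_of_diagonal (f : Module.End K (α →₀ K)) {μ : α → K}
    (hμ : Function.Injective μ) (hf : ∀ v a, f v a = μ a * v a) (hW : ∀ v ∈ W, f v ∈ W)
    {v : α →₀ K} (hv : v ∈ W) (a : α) : single a (v a) ∈ W := by
  classical
  induction hn : v.support.card using Nat.strong_induction_on generalizing v a with
  | _ n ih =>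
  by_cases ha : v a = 0
  · simp [ha]
  -- `f - μ a` kills the `a`-component and rescales the others by nonzero factors.
  set w := f v - μ a • v
  have hw : w ∈ W := W.sub_mem (hW v hv) (W.smul_mem _ hv)
  have hw_apply : ∀ b, w b = (μ b - μ a) * v b := fun b => by
    simp only [w, coe_sub, Finsupp.coe_smul, Pi.sub_apply, Pi.smul_apply, smul_eq_mul, hf]
    ring
  have hw_card : w.support.card < n := by
    calc w.support.card ≤ (v.support.erase a).card := Finset.card_le_card fun b hb => by
          simp only [Finset.mem_erase, mem_support_iff, hw_apply, mul_ne_zero_iff,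
            sub_ne_zero] at hb ⊢
          exact ⟨fun hba => hb.1 (congrArg μ hba), hb.2⟩
      _ < n := hn ▸ Finset.card_erase_lt_of_mem (mem_support_iff.mpr ha)
  have h_ne : ∀ b ≠ a, single b (v b) ∈ W := fun b hb => by
    have hc : μ b - μ a ≠ 0 := sub_ne_zero.mpr (hμ.ne hb)
    have := W.smul_mem (μ b - μ a)⁻¹ (ih _ hw_card hw b rfl)
    rwa [hw_apply, smul_single, smul_eq_mul, inv_mul_cancel_left₀ hc] at this
  have h_erase : v.erase a ∈ W := Submodule.mem_of_forall_single_apply_mem fun b hb => by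
    have hba : b ≠ a := by rintro rfl; simp at hb
    simpa [erase_ne hba] using h_ne b hba
  exact sub_eq_of_eq_add (single_add_erase a v).symm ▸ W.sub_mem hv h_erase

end DiagonalInvariant

theorem Hop_apply (v : ℤ →₀ ℂ) (k : ℤ) : Hop v k = 2 * k * v k := by
  induction v using Finsupp.induction_linear with
  | zero => simp
  | add f g hf hg => simp [hf, hg, mul_add]
  | single j c => by_cases hj : j = k <;> simp [Hop, hj]

theorem Xplus_single (h : ℝ) (l : ℂ) (k : ℤ) (c : ℂ) :
    Xplus h l (single k c) = single (k + 1) (sinh ((k - l) * h / 2) / sinh (h / 2) * c) := by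
  simp [Xplus, smul_single]

theorem Xminus_single (h : ℝ) (l : ℂ) (k : ℤ) (c : ℂ) :
    Xminus h l (single k c) = single (k - 1) (-(sinh ((k + l) * h / 2) / sinh (h / 2)) * c) := by
  simp [Xminus, smul_single]

theorem sinh_half_ne_zero {h : ℝ} (hh : 0 < h) : sinh (h / 2) ≠ 0 := by
  have : ((Real.sinh (h / 2) : ℝ) : ℂ) ≠ 0 :=
    ofReal_ne_zero.mpr (Real.sinh_ne_zero.mpr (by positivity))
  simpa using this

theorem sinh_sub_mul_half_ne_zero {h : ℝ} (hh : 0 < h) {l : ℂ}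
    (hl : ∀ n m : ℤ, l ≠ n + 2 * Real.pi * I / h * m) (k : ℤ) :
    sinh ((k - l) * h / 2) ≠ 0 := by
  intro h0
  obtain ⟨m, hm⟩ := sin_eq_zero_iff.mp (by rw [sin_mul_I, h0, zero_mul] :
    sin ((k - l) * h / 2 * I) = 0)
  have hhC : (h : ℂ) ≠ 0 := ofReal_ne_zero.mpr hh.ne'
  apply hl k m
  field_simp
  linear_combination (2 * I) * hm + (l * h - h * k) * I_sq

theorem sinh_add_mul_half_ne_zero {h : ℝ} (hh : 0 < h) {l : ℂ}
    (hl : ∀ n m : ℤ, l ≠ n + 2 * Real.pi * I / h * m) (k : ℤ) :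
    sinh ((k + l) * h / 2) ≠ 0 := by
  have := sinh_sub_mul_half_ne_zero hh hl (-k)
  rwa [show ((-k : ℤ) - l) * h / 2 = -((k + l) * h / 2) by push_cast; ring, sinh_neg,
    neg_ne_zero] at this

/-- If `l ∉ ℤ + (2πi/h)ℤ` then `V^{(l)}` is a simple module: every subspace invariant
under `X⁺`, `X⁻` and `H` is `{0}` or everything. -/
theorem Vl_simple (h : ℝ) (hh : 0 < h) (l : ℂ)
    (hl : ∀ n m : ℤ, l ≠ (n : ℂ) + (2 * Real.pi * Complex.I / h) * m) :
    ∀ W : Submodule ℂ (ℤ →₀ ℂ),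
      (∀ v ∈ W, Xplus h l v ∈ W) → (∀ v ∈ W, Xminus h l v ∈ W) →
      (∀ v ∈ W, Hop v ∈ W) → W = ⊥ ∨ W = ⊤ := by
  intro W hXp hXm hH
  refine or_iff_not_imp_left.mpr fun hW => ?_
  obtain ⟨v, hv, hv0⟩ := Submodule.exists_mem_ne_zero_of_ne_bot hW
  obtain ⟨k₀, hk₀⟩ := support_nonempty_iff.mpr hv0
  have hμ : Function.Injective fun k : ℤ => 2 * (k : ℂ) := fun a b hab => by simpa using hab
  have h_base : single k₀ (1 : ℂ) ∈ W :=
    W.single_mem_of_single_mem (mem_support_iff.mp hk₀)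
      (W.single_apply_mem_of_diagonal Hop hμ Hop_apply hH hv k₀) 1
  have h_up : ∀ k, single k (1 : ℂ) ∈ W → single (k + 1) (1 : ℂ) ∈ W := fun k hk =>
    W.single_mem_of_single_mem
      (mul_ne_zero (div_ne_zero (sinh_sub_mul_half_ne_zero hh hl k) (sinh_half_ne_zero hh))
        one_ne_zero)
      (Xplus_single h l k 1 ▸ hXp _ hk) 1
  have h_down : ∀ k, single k (1 : ℂ) ∈ W → single (k - 1) (1 : ℂ) ∈ W := fun k hk =>
    W.single_mem_of_single_mem
      (mul_ne_zero (neg_ne_zero.mpr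
        (div_ne_zero (sinh_add_mul_half_ne_zero hh hl k) (sinh_half_ne_zero hh))) one_ne_zero)
      (Xminus_single h l k 1 ▸ hXm _ hk) 1
  have h_all : ∀ k, single k (1 : ℂ) ∈ W := fun k =>
    Int.inductionOn' k k₀ h_base (fun k _ => h_up k) (fun k _ => h_down k)
  rw [eq_top_iff, ← (Finsupp.basisSingleOne (R := ℂ) (ι := ℤ)).span_eq, Submodule.span_le]
  rintro _ ⟨k, rfl⟩
  simpa using h_all k
end

section
/- Let h > 0 be real and l₁, l₂ ∈ ℂ. Then sinh(l₁h/2)·sinh((l₁+1)h/2) = sinh(l₂h/2)·sinh((l₂+1)h/2) if and only if l₁ − l₂ ∈ (2πi/h)ℤ or l₁ + l₂ + 1 ∈ (2πi/h)ℤ (i.e. there exists n ∈ ℤ with l₁ − l₂ = 2πin/h, or there exists n ∈ ℤ with l₁ + l₂ + 1 = 2πin/h). -/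
open Complex

lemma sinh_mul_sinh' (a b : ℂ) :
    Complex.sinh a * Complex.sinh b =
      (Complex.cosh (a + b) - Complex.cosh (a - b)) / 2 := by
  rw [Complex.sinh, Complex.sinh, Complex.cosh, Complex.cosh]
  rw [neg_add, sub_eq_add_neg a b, neg_add, neg_neg, Complex.exp_add, Complex.exp_add,
    Complex.exp_add, Complex.exp_add]
  ring

/-- For `h > 0`, `sinh(l₁h/2)sinh((l₁+1)h/2) = sinh(l₂h/2)sinh((l₂+1)h/2)` iff
`l₁ − l₂ ∈ (2πi/h)ℤ` or `l₁ + l₂ + 1 ∈ (2πi/h)ℤ`. -/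
theorem sinh_product_eq_iff (h : ℝ) (hh : 0 < h) (l₁ l₂ : ℂ) :
    Complex.sinh (l₁ * h / 2) * Complex.sinh ((l₁ + 1) * h / 2) =
        Complex.sinh (l₂ * h / 2) * Complex.sinh ((l₂ + 1) * h / 2) ↔
      (∃ n : ℤ, l₁ - l₂ = 2 * Real.pi * Complex.I * n / h) ∨
      (∃ n : ℤ, l₁ + l₂ + 1 = 2 * Real.pi * Complex.I * n / h) := by
  have h0 : (h : ℂ) ≠ 0 := by exact_mod_cast hh.ne'
  have hI := Complex.I_sq
  have main : Complex.cosh (l₁ * h / 2 + (l₁ + 1) * h / 2) =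
      Complex.cosh (l₂ * h / 2 + (l₂ + 1) * h / 2) ↔
      (∃ n : ℤ, l₁ - l₂ = 2 * Real.pi * Complex.I * n / h) ∨
      (∃ n : ℤ, l₁ + l₂ + 1 = 2 * Real.pi * Complex.I * n / h) := by
    rw [← Complex.cos_mul_I, ← Complex.cos_mul_I, Complex.cos_eq_cos_iff]
    constructor
    · rintro ⟨k, hk | hk⟩
      · left
        refine ⟨k, ?_⟩
        field_simp
        linear_combination Complex.I * hk + ((l₁ - l₂) * (h : ℂ)) * hI
      · right
        refine ⟨-k, ?_⟩
        push_cast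
        field_simp
        linear_combination -Complex.I * hk + ((h : ℂ) * (l₁ + l₂ + 1)) * hI
    · rintro (⟨n, hn⟩ | ⟨n, hn⟩)
      · refine ⟨n, Or.inl ?_⟩
        field_simp at hn
        linear_combination -Complex.I * hn + (-2 * (n : ℂ) * (Real.pi : ℂ)) * hI
      · refine ⟨-n, Or.inr ?_⟩
        field_simp at hn
        push_cast
        linear_combination Complex.I * hn + (2 * (n : ℂ) * (Real.pi : ℂ)) * hI
  rw [sinh_mul_sinh', sinh_mul_sinh']
  have e1 : l₁ * (h : ℂ) / 2 - (l₁ + 1) * h / 2 = l₂ * h / 2 - (l₂ + 1) * h / 2 := by ring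
  rw [e1]
  constructor
  · intro hx
    exact main.mp (by linear_combination 2 * hx)
  · intro hx
    linear_combination (main.mpr hx) / 2
end

section
/- Let 0 < q < 1 and let Fun(U)_q be the quotient of the free ℂ-algebra on three generators z, w, f (w playing the role of z*, f the role of the finite function f₀) by the two-sided ideal generated by wz − q²zw − (1−q²), wf, fz, and f² − f. Then the family of elements {z^j f w^k : j, k ∈ ℤ₊} is linearly independent in Fun(U)_q, and its linear span equals the two-sided ideal of Fun(U)_q generated by f; i.e. the elements z^j f w^k form a ℂ-vector space basis of the ideal (f). -/
/-- Generators `z, w, f` of the covariant *-algebra `Fun(U)_q` (`w` plays the role of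
`z*` and `f` the role of the finite function `f₀`). -/
inductive FunGen : Type | z : FunGen | w : FunGen | f : FunGen

open FreeAlgebra FunGen in
/-- The defining relations of `Fun(U)_q`: `wz = q²zw + 1 − q²`, `wf = fz = 0`, `f² = f`. -/
inductive FunRel (q : ℝ) : FreeAlgebra ℂ FunGen → FreeAlgebra ℂ FunGen → Prop
  | comm : FunRel q (ι ℂ w * ι ℂ z) ((q : ℂ) ^ 2 • (ι ℂ z * ι ℂ w) + (1 - (q : ℂ) ^ 2) • 1)
  | wf : FunRel q (ι ℂ w * ι ℂ f) 0
  | fz : FunRel q (ι ℂ f * ι ℂ z) 0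
  | idem : FunRel q (ι ℂ f * ι ℂ f) (ι ℂ f)

/-- The algebra `Fun(U)_q`, realized as the quotient of the free algebra `ℂ⟨z,w,f⟩`
by the two-sided ideal generated by the relations. -/
abbrev FunUq (q : ℝ) : Type := RingQuot (FunRel q)

namespace FunUq
variable (q : ℝ)
noncomputable def z : FunUq q := RingQuot.mkAlgHom ℂ (FunRel q) (FreeAlgebra.ι ℂ FunGen.z)
noncomputable def w : FunUq q := RingQuot.mkAlgHom ℂ (FunRel q) (FreeAlgebra.ι ℂ FunGen.w)
noncomputable def f : FunUq q := RingQuot.mkAlgHom ℂ (FunRel q) (FreeAlgebra.ι ℂ FunGen.f)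
end FunUq

namespace FunUqAux

noncomputable def Zop : Module.End ℂ (ℕ →₀ ℂ) := Finsupp.lmapDomain ℂ ℂ (· + 1)
noncomputable def Wop (q : ℝ) : Module.End ℂ (ℕ →₀ ℂ) :=
  Finsupp.lsum ℂ fun n => (1 - ((q : ℂ) ^ 2) ^ n) • Finsupp.lsingle (n - 1)
noncomputable def Fop : Module.End ℂ (ℕ →₀ ℂ) :=
  (Finsupp.lsingle 0).comp (Finsupp.lapply 0)

@[simp] lemma Zop_single (n : ℕ) (b : ℂ) :
    Zop (Finsupp.single n b) = Finsupp.single (n + 1) b := by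
  simp [Zop, Finsupp.mapDomain_single]

@[simp] lemma Wop_single (q : ℝ) (n : ℕ) (b : ℂ) :
    Wop q (Finsupp.single n b) = (1 - ((q : ℂ) ^ 2) ^ n) • Finsupp.single (n - 1) b := by
  simp [Wop, Finsupp.lsum_apply, Finsupp.sum_single_index]

@[simp] lemma Fop_single (n : ℕ) (b : ℂ) :
    Fop (Finsupp.single n b) = if n = 0 then Finsupp.single 0 b else 0 := by
  simp [Fop, Finsupp.lapply_apply, Finsupp.single_apply]
  split <;> simp_all

variable (q : ℝ)

lemma endo_comm : Wop q * Zop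
    = (q : ℂ) ^ 2 • (Zop * Wop q) + (1 - (q : ℂ) ^ 2) • (1 : Module.End ℂ (ℕ →₀ ℂ)) := by
  refine Finsupp.lhom_ext fun n b => ?_
  cases n with
  | zero =>
    simp [Module.End.mul_apply, Finsupp.smul_single, smul_smul]
  | succ m =>
    simp only [Module.End.mul_apply, LinearMap.add_apply, LinearMap.smul_apply,
      Module.End.one_apply, Zop_single, Wop_single, Nat.add_sub_cancel, map_smul,
      Finsupp.smul_single, smul_eq_mul, Nat.succ_sub_one]
    rw [← Finsupp.single_add]
    congr 1
    ring

lemma endo_wf : Wop q * Fop = 0 := by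
  refine Finsupp.lhom_ext fun n b => ?_
  simp [Module.End.mul_apply]
  split <;> simp

lemma endo_fz : Fop * Zop = 0 := by
  refine Finsupp.lhom_ext fun n b => ?_
  simp [Module.End.mul_apply]

lemma endo_idem : Fop * Fop = Fop := by
  refine Finsupp.lhom_ext fun n b => ?_
  simp [Module.End.mul_apply]
  split <;> simp

noncomputable def gen (q : ℝ) : FunGen → Module.End ℂ (ℕ →₀ ℂ)
  | .z => Zop | .w => Wop q | .f => Fop

noncomputable def ρ : FunUq q →ₐ[ℂ] Module.End ℂ (ℕ →₀ ℂ) :=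
  RingQuot.liftAlgHom ℂ ⟨FreeAlgebra.lift ℂ (gen q), by
    rintro x y ⟨⟩ <;>
      simp only [map_mul, map_add, map_smul, map_one, map_zero, FreeAlgebra.lift_ι_apply, gen]
    · exact endo_comm q
    · exact endo_wf q
    · exact endo_fz
    · exact endo_idem⟩

@[simp] lemma ρ_z : ρ q (FunUq.z q) = Zop := by
  simp [ρ, FunUq.z, RingQuot.liftAlgHom_mkAlgHom_apply, FreeAlgebra.lift_ι_apply, gen]

@[simp] lemma ρ_w : ρ q (FunUq.w q) = Wop q := by
  simp [ρ, FunUq.w, RingQuot.liftAlgHom_mkAlgHom_apply, FreeAlgebra.lift_ι_apply, gen]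

@[simp] lemma ρ_f : ρ q (FunUq.f q) = Fop := by
  simp [ρ, FunUq.f, RingQuot.liftAlgHom_mkAlgHom_apply, FreeAlgebra.lift_ι_apply, gen]

end FunUqAux

namespace FunUqAux
variable (q : ℝ)

lemma Zpow_single (j n : ℕ) (b : ℂ) :
    (Zop ^ j) (Finsupp.single n b) = Finsupp.single (n + j) b := by
  induction j with
  | zero => simp
  | succ m ih =>
    rw [pow_succ', Module.End.mul_apply, ih, Zop_single, add_assoc]

lemma Wpow_single (k n : ℕ) (b : ℂ) :
    ((Wop q) ^ k) (Finsupp.single n b)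
      = (∏ i ∈ Finset.range k, (1 - ((q : ℂ) ^ 2) ^ (n - i))) • Finsupp.single (n - k) b := by
  induction k generalizing n with
  | zero => simp
  | succ m ih =>
    rw [pow_succ, Module.End.mul_apply, Wop_single, map_smul, ih, smul_smul,
      Finset.prod_range_succ']
    congr 1
    · rw [mul_comm, Nat.sub_zero]
      congr 1
      exact Finset.prod_congr rfl fun i _ => by rw [Nat.sub_sub, Nat.add_comm 1 i]
    · congr 1
      omega

noncomputable def d (q : ℝ) (k : ℕ) : ℂ := ∏ i ∈ Finset.range k, (1 - ((q : ℂ) ^ 2) ^ (k - i))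

lemma d_ne_zero (hq0 : 0 < q) (hq1 : q < 1) (k : ℕ) : d q k ≠ 0 := by
  refine Finset.prod_ne_zero_iff.mpr fun i hi => ?_
  rw [Finset.mem_range] at hi
  have h1 : ((q : ℂ) ^ 2) ^ (k - i) = ((q ^ 2) ^ (k - i) : ℝ) := by push_cast; ring
  rw [h1, sub_ne_zero]
  intro h
  have : ((q ^ 2) ^ (k - i) : ℝ) = 1 := by exact_mod_cast h.symm
  have hlt : (q ^ 2) ^ (k - i) < 1 := by
    apply pow_lt_one₀ (by positivity) (by nlinarith) (by omega)
  linarith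

lemma T_apply (j k n : ℕ) :
    (Zop ^ j * Fop * (Wop q) ^ k) (Finsupp.single n (1 : ℂ))
      = if n = k then d q k • Finsupp.single j (1 : ℂ) else 0 := by
  rw [Module.End.mul_apply, Module.End.mul_apply, Wpow_single, map_smul, map_smul]
  rcases lt_trichotomy n k with h | h | h
  · rw [if_neg h.ne]
    have : (∏ i ∈ Finset.range k, (1 - ((q : ℂ) ^ 2) ^ (n - i))) = 0 := by
      refine Finset.prod_eq_zero (Finset.mem_range.mpr h) ?_
      simp
    rw [this]; simp
  · subst h
    rw [if_pos rfl]
    simp [Zpow_single, d]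
  · rw [if_neg h.ne']
    rw [Fop_single, if_neg (by omega)]
    simp

end FunUqAux

namespace FunUqAux
variable (q : ℝ)

lemma linind (hq0 : 0 < q) (hq1 : q < 1) :
    LinearIndependent ℂ (fun jk : ℕ × ℕ => FunUq.z q ^ jk.1 * FunUq.f q * FunUq.w q ^ jk.2) := by
  rw [linearIndependent_iff']
  intro s g hg jk hjk
  have h1 : ∑ i ∈ s, g i • (Zop ^ i.1 * Fop * Wop q ^ i.2) = (0 : Module.End ℂ (ℕ →₀ ℂ)) := by
    have h := congrArg (ρ q) hg
    simpa only [map_sum, map_smul, map_mul, map_pow, ρ_z, ρ_w, ρ_f, map_zero] using h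
  have h2 : ∑ i ∈ s,
      g i * (((Zop ^ i.1 * Fop * Wop q ^ i.2) (Finsupp.single jk.2 1)) jk.1) = 0 := by
    have h := congrArg (fun T : Module.End ℂ (ℕ →₀ ℂ) => (T (Finsupp.single jk.2 1)) jk.1) h1
    simpa [LinearMap.sum_apply, Finsupp.finset_sum_apply, smul_eq_mul] using h
  rw [Finset.sum_eq_single_of_mem jk hjk] at h2
  · rw [T_apply, if_pos rfl] at h2
    simp only [Finsupp.smul_apply, Finsupp.single_apply, if_pos rfl, if_true, smul_eq_mul,
      mul_one] at h2
    rcases mul_eq_zero.mp h2 with h | h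
    · exact h
    · exact absurd h (d_ne_zero q hq0 hq1 jk.2)
  · intro i hi hne
    rw [T_apply]
    by_cases h : jk.2 = i.2
    · rw [if_pos h]
      have hne1 : i.1 ≠ jk.1 := fun h1 => hne (Prod.ext h1 h.symm)
      simp [Finsupp.single_apply, hne1]
    · rw [if_neg h]; simp

end FunUqAux

namespace FunUqAux
variable (q : ℝ)

lemma rel_comm : FunUq.w q * FunUq.z q
    = (q : ℂ) ^ 2 • (FunUq.z q * FunUq.w q) + (1 - (q : ℂ) ^ 2) • (1 : FunUq q) := by
  have h := RingQuot.mkAlgHom_rel ℂ (FunRel.comm (q := q))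
  simpa [FunUq.z, FunUq.w, map_mul, map_add, map_smul, map_one] using h

lemma rel_wf : FunUq.w q * FunUq.f q = 0 := by
  have h := RingQuot.mkAlgHom_rel ℂ (FunRel.wf (q := q))
  simpa [FunUq.w, FunUq.f, map_mul] using h

lemma rel_fz : FunUq.f q * FunUq.z q = 0 := by
  have h := RingQuot.mkAlgHom_rel ℂ (FunRel.fz (q := q))
  simpa [FunUq.f, FunUq.z, map_mul] using h

lemma rel_idem : FunUq.f q * FunUq.f q = FunUq.f q := by
  have h := RingQuot.mkAlgHom_rel ℂ (FunRel.idem (q := q))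
  simpa [FunUq.f, map_mul] using h

noncomputable def v (q : ℝ) (jk : ℕ × ℕ) : FunUq q :=
  FunUq.z q ^ jk.1 * FunUq.f q * FunUq.w q ^ jk.2

noncomputable def P (q : ℝ) : Submodule ℂ (FunUq q) := Submodule.span ℂ (Set.range (v q))

lemma v_mem (jk : ℕ × ℕ) : v q jk ∈ P q := Submodule.subset_span ⟨jk, rfl⟩

lemma z_mul_v (j k : ℕ) : FunUq.z q * v q (j, k) = v q (j + 1, k) := by
  simp only [v]
  rw [← mul_assoc, ← mul_assoc, ← pow_succ']

lemma v_mul_w (j k : ℕ) : v q (j, k) * FunUq.w q = v q (j, k + 1) := by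
  simp only [v]
  rw [mul_assoc, ← pow_succ]

lemma f_mul_v (j k : ℕ) : FunUq.f q * v q (j, k) ∈ P q := by
  cases j with
  | zero =>
    have h : FunUq.f q * v q (0, k) = v q (0, k) := by
      simp only [v, pow_zero, one_mul, ← mul_assoc, rel_idem]
    rw [h]; exact v_mem q _
  | succ m =>
    have h : FunUq.f q * v q (m + 1, k) = 0 := by
      simp only [v, pow_succ', ← mul_assoc, rel_fz, zero_mul]
    rw [h]; exact (P q).zero_mem

lemma v_mul_f (j k : ℕ) : v q (j, k) * FunUq.f q ∈ P q := by
  cases k with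
  | zero =>
    have h : v q (j, 0) * FunUq.f q = v q (j, 0) := by
      simp only [v, pow_zero, mul_one, mul_assoc, rel_idem]
    rw [h]; exact v_mem q _
  | succ m =>
    have h : v q (j, m + 1) * FunUq.f q = 0 := by
      rw [← v_mul_w, mul_assoc, rel_wf, mul_zero]
    rw [h]; exact (P q).zero_mem

lemma mulLeft_stab (a : FunUq q) (h : ∀ jk, a * v q jk ∈ P q) :
    ∀ x ∈ P q, a * x ∈ P q := by
  intro x hx
  induction hx using Submodule.span_induction with
  | mem y hy => obtain ⟨jk, rfl⟩ := hy; exact h jk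
  | zero => rw [mul_zero]; exact (P q).zero_mem
  | add y z hy hz ihy ihz => rw [mul_add]; exact (P q).add_mem ihy ihz
  | smul r y hy ihy => rw [mul_smul_comm]; exact (P q).smul_mem r ihy

lemma mulRight_stab (a : FunUq q) (h : ∀ jk, v q jk * a ∈ P q) :
    ∀ x ∈ P q, x * a ∈ P q := by
  intro x hx
  induction hx using Submodule.span_induction with
  | mem y hy => obtain ⟨jk, rfl⟩ := hy; exact h jk
  | zero => rw [zero_mul]; exact (P q).zero_mem
  | add y z hy hz ihy ihz => rw [add_mul]; exact (P q).add_mem ihy ihz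
  | smul r y hy ihy => rw [smul_mul_assoc]; exact (P q).smul_mem r ihy

lemma z_stab : ∀ x ∈ P q, FunUq.z q * x ∈ P q :=
  mulLeft_stab q _ fun jk => by rw [show jk = (jk.1, jk.2) from rfl, z_mul_v]; exact v_mem q _

lemma w_rstab : ∀ x ∈ P q, x * FunUq.w q ∈ P q :=
  mulRight_stab q _ fun jk => by rw [show jk = (jk.1, jk.2) from rfl, v_mul_w]; exact v_mem q _

lemma w_mul_v (j k : ℕ) : FunUq.w q * v q (j, k) ∈ P q := by
  induction j with
  | zero =>
    have h : FunUq.w q * v q (0, k) = 0 := by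
      simp only [v, pow_zero, one_mul, ← mul_assoc, rel_wf, zero_mul]
    rw [h]; exact (P q).zero_mem
  | succ m ih =>
    rw [← z_mul_v, ← mul_assoc, rel_comm, add_mul, smul_mul_assoc, smul_mul_assoc, one_mul,
      mul_assoc]
    exact (P q).add_mem ((P q).smul_mem _ (z_stab q _ ih)) ((P q).smul_mem _ (v_mem q _))

lemma v_mul_z (j k : ℕ) : v q (j, k) * FunUq.z q ∈ P q := by
  induction k with
  | zero =>
    have h : v q (j, 0) * FunUq.z q = 0 := by
      simp only [v, pow_zero, mul_one, mul_assoc, rel_fz, mul_zero]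
    rw [h]; exact (P q).zero_mem
  | succ m ih =>
    rw [← v_mul_w, mul_assoc, rel_comm, mul_add, mul_smul_comm, mul_smul_comm, mul_one,
      ← mul_assoc]
    exact (P q).add_mem ((P q).smul_mem _ (w_rstab q _ ih)) ((P q).smul_mem _ (v_mem q _))

lemma adjoin_eq_top :
    Algebra.adjoin ℂ ({FunUq.z q, FunUq.w q, FunUq.f q} : Set (FunUq q)) = ⊤ := by
  have key : ∀ y : FreeAlgebra ℂ FunGen, RingQuot.mkAlgHom ℂ (FunRel q) y ∈
      Algebra.adjoin ℂ ({FunUq.z q, FunUq.w q, FunUq.f q} : Set (FunUq q)) := by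
    intro y
    induction y with
    | grade0 r => rw [AlgHom.commutes]; exact Subalgebra.algebraMap_mem _ r
    | grade1 g =>
      cases g
      · exact Algebra.subset_adjoin (by left; rfl)
      · exact Algebra.subset_adjoin (by right; left; rfl)
      · exact Algebra.subset_adjoin (by right; right; rfl)
    | mul a b ha hb => rw [map_mul]; exact mul_mem ha hb
    | add a b ha hb => rw [map_add]; exact add_mem ha hb
  rw [eq_top_iff]
  intro x _
  obtain ⟨y, rfl⟩ := RingQuot.mkAlgHom_surjective ℂ (FunRel q) x
  exact key y

lemma mul_left_mem (a : FunUq q) : ∀ x ∈ P q, a * x ∈ P q := by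
  have ha : a ∈ Algebra.adjoin ℂ ({FunUq.z q, FunUq.w q, FunUq.f q} : Set (FunUq q)) := by
    rw [adjoin_eq_top]; trivial
  induction ha using Algebra.adjoin_induction with
  | mem g hg =>
    rcases hg with rfl | rfl | rfl
    · exact z_stab q
    · exact mulLeft_stab q _ fun jk => by
        rw [show jk = (jk.1, jk.2) from rfl]; exact w_mul_v q jk.1 jk.2
    · exact mulLeft_stab q _ fun jk => by
        rw [show jk = (jk.1, jk.2) from rfl]; exact f_mul_v q jk.1 jk.2
  | algebraMap r => intro x hx; rw [← Algebra.smul_def]; exact (P q).smul_mem r hx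
  | add a b ha hb iha ihb => intro x hx; rw [add_mul]; exact (P q).add_mem (iha x hx) (ihb x hx)
  | mul a b ha hb iha ihb => intro x hx; rw [mul_assoc]; exact iha _ (ihb x hx)

lemma mul_right_mem (a : FunUq q) : ∀ x ∈ P q, x * a ∈ P q := by
  have ha : a ∈ Algebra.adjoin ℂ ({FunUq.z q, FunUq.w q, FunUq.f q} : Set (FunUq q)) := by
    rw [adjoin_eq_top]; trivial
  induction ha using Algebra.adjoin_induction with
  | mem g hg =>
    rcases hg with rfl | rfl | rfl
    · exact mulRight_stab q _ fun jk => by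
        rw [show jk = (jk.1, jk.2) from rfl]; exact v_mul_z q jk.1 jk.2
    · exact w_rstab q
    · exact mulRight_stab q _ fun jk => by
        rw [show jk = (jk.1, jk.2) from rfl]; exact v_mul_f q jk.1 jk.2
  | algebraMap r =>
    intro x hx
    rw [← Algebra.commutes, ← Algebra.smul_def]
    exact (P q).smul_mem r hx
  | add a b ha hb iha ihb => intro x hx; rw [mul_add]; exact (P q).add_mem (iha x hx) (ihb x hx)
  | mul a b ha hb iha ihb => intro x hx; rw [← mul_assoc]; exact ihb _ (iha x hx)

noncomputable def Pideal (q : ℝ) : TwoSidedIdeal (FunUq q) :=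
  TwoSidedIdeal.mk' (P q : Set (FunUq q)) (P q).zero_mem (fun hx hy => (P q).add_mem hx hy)
    (fun hx => (P q).neg_mem hx) (fun {x y} hy => mul_left_mem q x y hy)
    (fun {x y} hx => mul_right_mem q y x hx)

lemma span_eq : (P q : Set (FunUq q)) = (TwoSidedIdeal.span {FunUq.f q} : Set (FunUq q)) := by
  have hfv : FunUq.f q = v q (0, 0) := by simp [v]
  apply Set.Subset.antisymm
  · intro x hx
    rw [SetLike.mem_coe] at hx ⊢
    induction hx using Submodule.span_induction with
    | mem y hy =>
      obtain ⟨⟨j, k⟩, rfl⟩ := hy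
      exact TwoSidedIdeal.mul_mem_right _ _ _
        (TwoSidedIdeal.mul_mem_left _ _ _ (TwoSidedIdeal.subset_span rfl))
    | zero => exact zero_mem _
    | add y z hy hz ihy ihz => exact add_mem ihy ihz
    | smul r y hy ihy =>
      rw [Algebra.smul_def]
      exact TwoSidedIdeal.mul_mem_left _ _ _ ihy
  · intro x hx
    rw [SetLike.mem_coe] at hx ⊢
    have hx' := TwoSidedIdeal.mem_span_iff.mp hx (Pideal q) ?_
    · rwa [Pideal, TwoSidedIdeal.mem_mk', SetLike.mem_coe] at hx'
    · intro y hy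
      rw [Set.mem_singleton_iff] at hy
      subst hy
      rw [SetLike.mem_coe, Pideal, TwoSidedIdeal.mem_mk', SetLike.mem_coe, hfv]
      exact v_mem q _

end FunUqAux


/-- The elements `z^j f w^k` (`j,k ∈ ℤ₊`) form a `ℂ`-vector space basis of the two-sided
ideal of `Fun(U)_q` generated by `f`: they are linearly independent and their linear span
equals that ideal. -/
theorem funUq_basis_of_ideal (q : ℝ) (hq0 : 0 < q) (hq1 : q < 1) :
    LinearIndependent ℂ (fun jk : ℕ × ℕ => FunUq.z q ^ jk.1 * FunUq.f q * FunUq.w q ^ jk.2) ∧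
    (Submodule.span ℂ
        (Set.range fun jk : ℕ × ℕ => FunUq.z q ^ jk.1 * FunUq.f q * FunUq.w q ^ jk.2) :
      Set (FunUq q)) = (TwoSidedIdeal.span {FunUq.f q} : Set (FunUq q)) :=
  ⟨FunUqAux.linind q hq0 hq1, FunUqAux.span_eq q⟩
end
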